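/- Consider the signed grammar G over the alphabet {a, b} with nonterminals {S, A}, start symbol S, and productions S → aSa, S → bSb, S → a, S → b, S → −A, A → −abAba, A → a (productions written with a minus sign carry sign −1, the others sign +1). Then G is admissible and generates the language L consisting of exactly those odd-length palindromes w over {a, b} such that either the central letter of w is b, or the central letter of w is a and the largest m ≥ 0 for which (ab)^m a (ba)^m occurs as the central factor of w (i.e., w = u (ab)^m a (ba)^m u^R for some word u) is odd. -/

import Mathlib

/-- A parse-tree node: either a terminal leaf or an internal node labeled by a
nonterminal with a list of children. -/
inductive PTree (N : Type) (T : Type) : Type where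
  | leaf (t : T) : PTree N T
  | node (A : N) (children : List (PTree N T)) : PTree N T

namespace PTree

variable {N T : Type}

/-- The symbol (nonterminal or terminal) labeling the root of a tree. -/
def toSymbol : PTree N T → N ⊕ T
  | leaf t => Sum.inr t
  | node A _ => Sum.inl A

/-- The yield of a parse tree: the word spelled by its leaves. -/
def yield : PTree N T → List T
  | leaf t => [t]
  | node _ cs => cs.attach.flatMap (fun c => yield c.1)
decreasing_by simp only [PTree.node.sizeOf_spec]; have h := List.sizeOf_lt_of_mem c.2; omega

/-- The sign of a parse tree w.r.t. a sign assignment on productions: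
the product of the signs of the productions used at its nodes. -/
def sign (σ : N × List (N ⊕ T) → ℤ) : PTree N T → ℤ
  | leaf _ => 1
  | node A cs => σ (A, cs.map toSymbol) * (cs.attach.map (fun c => sign σ c.1)).prod
decreasing_by simp only [PTree.node.sizeOf_spec]; have h := List.sizeOf_lt_of_mem c.2; omega

/-- Validity of a parse tree w.r.t. a set of productions: at every internal node,
the node label together with the list of symbols of its children is a production. -/
inductive Valid (R : Set (N × List (N ⊕ T))) : PTree N T → Prop where
  | leaf (t : T) : Valid R (PTree.leaf t)
  | node (A : N) (cs : List (PTree N T)) :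
      (A, cs.map toSymbol) ∈ R → (∀ c ∈ cs, Valid R c) → Valid R (PTree.node A cs)

end PTree

/-- A signed grammar over a (finite) terminal alphabet `T`: a context-free grammar
with finitely many nonterminals and productions, together with a sign `1` or `-1`
attached to each production. -/
structure SignedGrammar (T : Type) : Type 1 where
  /-- the type of nonterminals -/
  N : Type
  finN : Finite N
  /-- the start symbol -/
  start : N
  /-- the productions `A → α`, `α ∈ (N ∪ T)*` -/
  rules : Set (N × List (N ⊕ T))
  finRules : rules.Finite
  /-- the sign of each production -/
  sign : N × List (N ⊕ T) → ℤ
  sign_valid : ∀ r ∈ rules, sign r = 1 ∨ sign r = -1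

namespace SignedGrammar

variable {T : Type}

/-- A parse tree over the grammar: a valid tree whose root is labeled by the start symbol. -/
def IsParseTree (G : SignedGrammar T) (t : PTree G.N T) : Prop :=
  PTree.Valid G.rules t ∧ t.toSymbol = Sum.inl G.start

/-- The set of parse trees over `G` with yield `w`. -/
def parseTreesOf (G : SignedGrammar T) (w : List T) : Set (PTree G.N T) :=
  {t | G.IsParseTree t ∧ t.yield = w}

/-- `G` is admissible if every word has only finitely many parse trees. -/
def Admissible (G : SignedGrammar T) : Prop :=
  ∀ w : List T, (G.parseTreesOf w).Finite

/-- `n_w(G)`: the sum of the signs of all parse trees over `G` with yield `w`. -/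
noncomputable def count (G : SignedGrammar T) (w : List T) : ℤ :=
  ∑ᶠ t ∈ G.parseTreesOf w, t.sign G.sign

/-- `G` generates the language `L` if `G` is admissible, `n_w(G) = 1` for every
`w ∈ L` and `n_w(G) = 0` for every `w ∉ L`. -/
def Generates (G : SignedGrammar T) (L : Language T) : Prop :=
  G.Admissible ∧ (∀ w ∈ L, G.count w = 1) ∧ (∀ w ∉ L, G.count w = 0)

/-- An ordinary context-free grammar: every production has sign `+1`. -/
def Ordinary (G : SignedGrammar T) : Prop :=
  ∀ r ∈ G.rules, G.sign r = 1

/-- The language generated by `G` in the usual sense: all yields of parse trees. -/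
def language (G : SignedGrammar T) : Language T :=
  {w | ∃ t : PTree G.N T, G.IsParseTree t ∧ t.yield = w}

/-- `G` is unambiguous if every word has at most one parse tree. -/
def Unambiguous (G : SignedGrammar T) : Prop :=
  ∀ t₁ t₂ : PTree G.N T, G.IsParseTree t₁ → G.IsParseTree t₂ →
    t₁.yield = t₂.yield → t₁ = t₂

/-- The number of parse trees of `G` with yield `w` (degree of ambiguity of `w`). -/
noncomputable def ambCount (G : SignedGrammar T) (w : List T) : ℕ :=
  Nat.card {t : PTree G.N T // t ∈ G.parseTreesOf w}

end SignedGrammar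


/-- The two-letter alphabet `{a, b}`. -/
inductive AB : Type
  | a
  | b
deriving DecidableEq

instance instFintypeAB : Fintype AB :=
  ⟨{AB.a, AB.b}, fun x => by cases x <;> simp⟩

/-- Nonterminals `{S, A}`. -/
inductive NT14 : Type
  | S
  | A
deriving DecidableEq

instance instFintypeNT14 : Fintype NT14 :=
  ⟨{NT14.S, NT14.A}, fun x => by cases x <;> simp⟩

open AB

/-- The signed grammar over `{a, b}` with productions
`S → aSa | bSb | a | b | -A`, `A → -abAba | a`, where productions written with
a minus sign have sign `-1` and the others sign `+1`. -/
def G14 : SignedGrammar AB where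
  N := NT14
  finN := inferInstance
  start := NT14.S
  rules := {(NT14.S, [Sum.inr a, Sum.inl NT14.S, Sum.inr a]),
            (NT14.S, [Sum.inr b, Sum.inl NT14.S, Sum.inr b]),
            (NT14.S, [Sum.inr a]),
            (NT14.S, [Sum.inr b]),
            (NT14.S, [Sum.inl NT14.A]),
            (NT14.A, [Sum.inr a, Sum.inr b, Sum.inl NT14.A, Sum.inr b, Sum.inr a]),
            (NT14.A, [Sum.inr a])}
  finRules := Set.Finite.insert _ (Set.Finite.insert _ (Set.Finite.insert _
    (Set.Finite.insert _ (Set.Finite.insert _ (Set.Finite.insert _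
    (Set.finite_singleton _))))))
  sign := fun r =>
    if r = (NT14.S, [Sum.inl NT14.A]) ∨
       r = (NT14.A, [Sum.inr a, Sum.inr b, Sum.inl NT14.A, Sum.inr b, Sum.inr a])
    then -1 else 1
  sign_valid := by
    intro r _
    split
    · exact Or.inr rfl
    · exact Or.inl rfl

/-- The central factor `(ab)^m a (ba)^m`. -/
def centralFactor (m : ℕ) : List AB :=
  (List.replicate m [a, b]).flatten ++ [a] ++ (List.replicate m [b, a]).flatten

/-!
Every parse tree of `G14` is `sTree u c`: a chain of `S → xSx` steps spelling `u`, closed either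
by `S → x` (`c = inr x`: sign `1`, core `x`) or by `S → A`, `k` uses of `A → abAba` and `A → a`
(`c = inl k`: sign `(-1)^(k+1)`, core `(ab)^k a (ba)^k`). Its yield is `u ++ core ++ uᴿ`, and as
cores have odd length a tree is determined by the core it puts in the middle of `w`. Hence `n_w` is
the number of letters `x` with `w = u x uᴿ` plus `∑_{k < n} (-1)^(k+1)`, where `(ab)^k a (ba)^k` is
a central factor of `w` exactly for `k < n`. For an odd palindrome with central letter `a` this is
`1 - [n odd]`, which is `1` exactly when the largest such `k`, namely `n - 1`, is odd.
-/

namespace List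

variable {α : Type*}

def IsCentralFactor (v w : List α) : Prop :=
  ∃ u, w = u ++ v ++ u.reverse

theorem isCentralFactor_singleton_iff {x : α} {w : List α} :
    IsCentralFactor [x] w ↔ ∃ u, w = u ++ x :: u.reverse := by
  simp [IsCentralFactor]

theorem IsCentralFactor.refl (v : List α) : IsCentralFactor v v :=
  ⟨[], by simp⟩

theorem IsCentralFactor.trans {v m w : List α} (hv : IsCentralFactor v m)
    (hm : IsCentralFactor m w) : IsCentralFactor v w := by
  obtain ⟨s, rfl⟩ := hv
  obtain ⟨u, rfl⟩ := hm
  exact ⟨u ++ s, by simp⟩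

theorem IsCentralFactor.length_le {v w : List α} (h : IsCentralFactor v w) :
    v.length ≤ w.length := by
  obtain ⟨u, rfl⟩ := h
  simp only [length_append, length_reverse]
  omega

theorem append_append_reverse_inj {u u' v v' : List α}
    (h : u ++ v ++ u.reverse = u' ++ v' ++ u'.reverse) (hv : v.length = v'.length) :
    u = u' ∧ v = v' := by
  have hu : u.length = u'.length := by
    have := congrArg length h
    simp only [length_append, length_reverse] at this
    omega
  simp only [append_assoc] at h
  obtain ⟨rfl, h⟩ := append_inj h hu
  exact ⟨rfl, (append_inj h hv).1⟩

theorem IsCentralFactor.eq_of_length_eq {v v' w : List α} (h : IsCentralFactor v w)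
    (h' : IsCentralFactor v' w) (hv : v.length = v'.length) : v = v' := by
  obtain ⟨u, rfl⟩ := h
  obtain ⟨u', hu'⟩ := h'
  exact (append_append_reverse_inj hu' hv).2

theorem setOf_isCentralFactor_singleton {x : α} {w : List α} (h : IsCentralFactor [x] w) :
    {y | IsCentralFactor [y] w} = {x} :=
  Set.eq_singleton_iff_unique_mem.2 ⟨h, fun _ hy => by simpa using hy.eq_of_length_eq h rfl⟩

end List

theorem Finset.sum_range_neg_one_pow_succ {R : Type*} [Ring R] (n : ℕ) :
    ∑ k ∈ range n, (-1 : R) ^ (k + 1) = if Even n then 0 else -1 := by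
  induction n with
  | zero => simp
  | succ n ih =>
    rw [sum_range_succ, ih]
    rcases Nat.even_or_odd n with h | h
    · simp [h, h.add_one.neg_one_pow, Nat.not_even_iff_odd]
    · simp [h.add_one, h.add_one.neg_one_pow, Nat.not_even_iff_odd.mpr h]

namespace PTree

variable {N T : Type}

@[simp]
theorem toSymbol_leaf (t : T) : (leaf t : PTree N T).toSymbol = .inr t := rfl

@[simp]
theorem toSymbol_node (A : N) (cs : List (PTree N T)) : (node A cs).toSymbol = .inl A := rfl

@[simp]
theorem toSymbol_eq_inr_iff {t : PTree N T} {x : T} : t.toSymbol = .inr x ↔ t = leaf x := by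
  cases t <;> simp

@[simp]
theorem yield_leaf (t : T) : (leaf t : PTree N T).yield = [t] := by
  rw [yield]

@[simp]
theorem yield_node (A : N) (cs : List (PTree N T)) : (node A cs).yield = cs.flatMap yield := by
  rw [yield, List.flatMap, List.flatMap, List.attach_map_val (f := yield)]

@[simp]
theorem sign_leaf (σ : N × List (N ⊕ T) → ℤ) (t : T) : (leaf t : PTree N T).sign σ = 1 := by
  rw [sign]

@[simp]
theorem sign_node (σ : N × List (N ⊕ T) → ℤ) (A : N) (cs : List (PTree N T)) :
    (node A cs).sign σ = σ (A, cs.map toSymbol) * (cs.map (sign σ)).prod := by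
  rw [sign, List.attach_map_val (f := sign σ)]

end PTree

open List (IsCentralFactor)

theorem centralFactor_zero : centralFactor 0 = [a] := by
  simp [centralFactor]

theorem centralFactor_succ (k : ℕ) :
    centralFactor (k + 1) = [a, b] ++ centralFactor k ++ [a, b].reverse := by
  rw [centralFactor, centralFactor, List.replicate_succ, List.replicate_succ']
  simp

theorem length_centralFactor (k : ℕ) : (centralFactor k).length = 4 * k + 1 := by
  induction k with
  | zero => simp [centralFactor_zero]
  | succ k ih => simp [centralFactor_succ, ih]; omega

theorem isCentralFactor_centralFactor_of_le {k m : ℕ} (h : k ≤ m) :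
    IsCentralFactor (centralFactor k) (centralFactor m) := by
  induction m, h using Nat.le_induction with
  | base => exact .refl _
  | succ m _ ih => exact ih.trans ⟨[a, b], centralFactor_succ m⟩

theorem exists_setOf_isCentralFactor_centralFactor_eq_Iio (w : List AB) :
    ∃ n, {k | IsCentralFactor (centralFactor k) w} = Set.Iio n := by
  classical
  have hex : ∃ n, ¬ IsCentralFactor (centralFactor n) w := by
    refine ⟨w.length, fun h => ?_⟩
    have := h.length_le
    rw [length_centralFactor] at this
    omega
  refine ⟨Nat.find hex, Set.ext fun k => ⟨fun hk => ?_, fun hk => ?_⟩⟩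
  · by_contra hk'
    have hle : Nat.find hex ≤ k := not_lt.mp hk'
    exact Nat.find_spec hex ((isCentralFactor_centralFactor_of_le hle).trans hk)
  · exact not_not.mp (Nat.find_min hex hk)

namespace G14

def aTree : ℕ → PTree NT14 AB
  | 0 => .node .A [.leaf a]
  | k + 1 => .node .A [.leaf a, .leaf b, aTree k, .leaf b, .leaf a]

def sTree : List AB → ℕ ⊕ AB → PTree NT14 AB
  | [], .inl k => .node .S [aTree k]
  | [], .inr x => .node .S [.leaf x]
  | x :: u, c => .node .S [.leaf x, sTree u c, .leaf x]

def core : ℕ ⊕ AB → List AB :=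
  Sum.elim centralFactor fun x => [x]

def coreSign : ℕ ⊕ AB → ℤ :=
  Sum.elim (fun k => (-1) ^ (k + 1)) fun _ => 1

def decompositions (w : List AB) : Set (List AB × (ℕ ⊕ AB)) :=
  {p | w = p.1 ++ core p.2 ++ p.1.reverse}

@[simp]
theorem toSymbol_aTree (k : ℕ) : (aTree k).toSymbol = .inl NT14.A := by
  cases k <;> rfl

@[simp]
theorem toSymbol_sTree (u : List AB) (c : ℕ ⊕ AB) : (sTree u c).toSymbol = .inl NT14.S := by
  rcases u with _ | ⟨x, u⟩ <;> rcases c with k | y <;> rfl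

theorem yield_aTree (k : ℕ) : (aTree k).yield = centralFactor k := by
  induction k with
  | zero => simp [aTree, centralFactor_zero]
  | succ k ih => simp [aTree, centralFactor_succ, ih]

theorem yield_sTree (u : List AB) (c : ℕ ⊕ AB) :
    (sTree u c).yield = u ++ core c ++ u.reverse := by
  induction u with
  | nil => rcases c with k | x <;> simp [sTree, core, yield_aTree]
  | cons x u ih => simp [sTree, ih]

-- `G14.N` is `NT14` only up to unfolding `G14`, which the generic `PTree` lemmas need to fire.
theorem sign_aTree (k : ℕ) : (aTree k).sign G14.sign = (-1) ^ k := by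
  dsimp only [G14]
  induction k with
  | zero => simp [aTree]
  | succ k ih => simp [aTree, ih, pow_succ]

theorem sign_sTree (u : List AB) (c : ℕ ⊕ AB) : (sTree u c).sign G14.sign = coreSign c := by
  have hA := sign_aTree
  dsimp only [G14] at hA ⊢
  induction u with
  | nil => rcases c with k | x <;> simp [sTree, coreSign, hA, pow_succ]
  | cons x u ih => simp [sTree, ih]

theorem valid_aTree (k : ℕ) : PTree.Valid G14.rules (aTree k) := by
  dsimp only [G14]
  induction k with
  | zero => exact .node _ _ (by simp) (by simp [PTree.Valid.leaf])
  | succ k ih => exact .node _ _ (by simp) (by simp [PTree.Valid.leaf, ih])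

theorem valid_sTree (u : List AB) (c : ℕ ⊕ AB) : PTree.Valid G14.rules (sTree u c) := by
  have hA := valid_aTree
  dsimp only [G14] at hA ⊢
  induction u with
  | nil =>
    rcases c with k | x
    · exact .node _ _ (by simp) (by simp [hA])
    · exact .node _ _ (by cases x <;> simp) (by simp [PTree.Valid.leaf])
  | cons x u ih => exact .node _ _ (by cases x <;> simp) (by simp [PTree.Valid.leaf, ih])

theorem aTree_injective : Function.Injective aTree := by
  intro k k' h
  induction k generalizing k' with
  | zero => cases k' <;> simp_all [aTree]
  | succ k ih =>
    cases k' with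
    | zero => simp [aTree] at h
    | succ k' => simp [aTree] at h; rw [ih h]

theorem aTree_ne_leaf (k : ℕ) (x : AB) : aTree k ≠ .leaf x := by
  cases k <;> simp [aTree]

theorem sTree_injective : Function.Injective (Function.uncurry sTree) := by
  rintro ⟨u, c⟩ ⟨u', c'⟩ h
  simp only [Function.uncurry_apply_pair] at h
  induction u generalizing u' with
  | nil =>
    rcases u' with _ | ⟨x', u'⟩ <;> rcases c with k | x <;> rcases c' with k' | y <;>
      simp [sTree] at h
    · rw [aTree_injective h]
    · exact absurd h (aTree_ne_leaf k y)
    · exact absurd h.symm (aTree_ne_leaf k' x)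
    · rw [h]
  | cons x u ih =>
    rcases u' with _ | ⟨x', u'⟩
    · rcases c' with k' | y <;> simp [sTree] at h
    · simp only [sTree, PTree.node.injEq, List.cons.injEq, PTree.leaf.injEq, true_and,
        and_true] at h
      obtain ⟨rfl, h, -⟩ := h
      simpa using ih u' h

theorem exists_eq_aTree {t : PTree NT14 AB} (ht : PTree.Valid G14.rules t)
    (hA : t.toSymbol = .inl .A) : ∃ k, t = aTree k := by
  dsimp only [G14] at ht
  induction ht with
  | leaf x => simp at hA
  | node X cs hrule _ ih =>
    obtain rfl : X = .A := by simpa using hA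
    simp at hrule
    rcases hrule with hcs | hcs
    · rcases cs with _ | ⟨c₁, _ | ⟨c₂, _ | ⟨c₃, _ | ⟨c₄, _ | ⟨c₅, _ | _⟩⟩⟩⟩⟩ <;> simp at hcs
      obtain ⟨rfl, rfl, hc₃, rfl, rfl⟩ := hcs
      obtain ⟨k, rfl⟩ := ih _ (by simp) hc₃
      exact ⟨k + 1, rfl⟩
    · rcases cs with _ | ⟨c₁, _ | _⟩ <;> simp at hcs
      subst hcs
      exact ⟨0, rfl⟩

theorem exists_eq_sTree {t : PTree NT14 AB} (ht : PTree.Valid G14.rules t)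
    (hS : t.toSymbol = .inl .S) : ∃ u c, t = sTree u c := by
  have hA := @exists_eq_aTree
  dsimp only [G14] at ht hA
  induction ht with
  | leaf x => simp at hS
  | node X cs hrule hvalid ih =>
    obtain rfl : X = .S := by simpa using hS
    have wrap (x : AB) (hcs : cs.map PTree.toSymbol = [.inr x, .inl .S, .inr x]) :
        ∃ u c, PTree.node .S cs = sTree u c := by
      rcases cs with _ | ⟨c₁, _ | ⟨c₂, _ | ⟨c₃, _ | _⟩⟩⟩ <;> simp at hcs
      obtain ⟨rfl, hc₂, rfl⟩ := hcs
      obtain ⟨u, c, rfl⟩ := ih _ (by simp) hc₂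
      exact ⟨x :: u, c, rfl⟩
    simp at hrule
    rcases hrule with hcs | hcs | rfl | rfl | ⟨c, rfl, hc⟩
    · exact wrap a hcs
    · exact wrap b hcs
    · exact ⟨[], .inr a, rfl⟩
    · exact ⟨[], .inr b, rfl⟩
    · obtain ⟨k, rfl⟩ := hA (hvalid c (by simp)) hc
      exact ⟨[], .inl k, rfl⟩

theorem isParseTree_iff {t : PTree G14.N AB} : G14.IsParseTree t ↔ ∃ u c, t = sTree u c := by
  constructor
  · rintro ⟨hvalid, hS⟩
    exact exists_eq_sTree hvalid hS
  · rintro ⟨u, c, rfl⟩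
    exact ⟨valid_sTree u c, toSymbol_sTree u c⟩

theorem parseTreesOf_eq_image (w : List AB) :
    G14.parseTreesOf w = Function.uncurry sTree '' decompositions w := by
  ext t
  constructor
  · rintro ⟨ht, rfl⟩
    obtain ⟨u, c, rfl⟩ := isParseTree_iff.1 ht
    exact ⟨(u, c), yield_sTree u c, rfl⟩
  · rintro ⟨⟨u, c⟩, hw, rfl⟩
    exact ⟨isParseTree_iff.2 ⟨u, c, rfl⟩, (yield_sTree u c).trans hw.symm⟩

theorem snd_injOn_decompositions (w : List AB) : Set.InjOn Prod.snd (decompositions w) := by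
  rintro ⟨u, c⟩ hu ⟨u', c'⟩ hu' (rfl : c = c')
  obtain ⟨rfl, -⟩ := List.append_append_reverse_inj (Eq.trans (Eq.symm hu) hu') rfl
  rfl

theorem image_snd_decompositions (w : List AB) :
    Prod.snd '' decompositions w =
      Sum.inl '' {k | IsCentralFactor (centralFactor k) w} ∪
        Sum.inr '' {x | IsCentralFactor [x] w} := by
  ext (k | x) <;> simp [decompositions, IsCentralFactor, core]

theorem admissible : G14.Admissible := by
  intro w
  obtain ⟨n, hn⟩ := exists_setOf_isCentralFactor_centralFactor_eq_Iio w
  rw [parseTreesOf_eq_image]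
  refine .image _ (.of_finite_image ?_ (snd_injOn_decompositions w))
  rw [image_snd_decompositions, hn]
  exact ((Set.finite_Iio n).image _).union ((Set.toFinite _).image _)

theorem count_eq (w : List AB) :
    G14.count w = ∑ᶠ k ∈ {k | IsCentralFactor (centralFactor k) w}, (-1) ^ (k + 1) +
      ∑ᶠ x ∈ {x | IsCentralFactor [x] w}, 1 := by
  obtain ⟨n, hn⟩ := exists_setOf_isCentralFactor_centralFactor_eq_Iio w
  have hsign : G14.count w = ∑ᶠ p ∈ decompositions w, coreSign p.2 := by
    rw [SignedGrammar.count, parseTreesOf_eq_image]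
    exact (finsum_mem_image sTree_injective.injOn).trans
      (finsum_mem_congr rfl fun p _ => sign_sTree p.1 p.2)
  rw [hsign, ← finsum_mem_image (snd_injOn_decompositions w), image_snd_decompositions,
    finsum_mem_union Set.disjoint_image_inl_image_inr
      ((hn ▸ Set.finite_Iio n).image _) ((Set.toFinite _).image _),
    finsum_mem_image Sum.inl_injective.injOn, finsum_mem_image Sum.inr_injective.injOn]
  rfl

def targetLanguage : Language AB :=
  {w | ∃ (u : List AB) (x : AB), w = u ++ x :: u.reverse ∧
    (x = b ∨ (x = a ∧ ∃ m : ℕ, Odd m ∧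
      (∃ v : List AB, w = v ++ centralFactor m ++ v.reverse) ∧
      ¬ ∃ v : List AB, w = v ++ centralFactor (m + 1) ++ v.reverse))}

theorem mem_targetLanguage_iff {w : List AB} {n : ℕ}
    (hn : {k | IsCentralFactor (centralFactor k) w} = Set.Iio n) :
    w ∈ targetLanguage ↔ IsCentralFactor [b] w ∨ (n ≠ 0 ∧ Even n) := by
  have hmem (k : ℕ) : IsCentralFactor (centralFactor k) w ↔ k < n := Set.ext_iff.1 hn k
  constructor
  · rintro ⟨u, x, hw, rfl | ⟨rfl, m, hm, hm₁, hm₂⟩⟩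
    · exact .inl (List.isCentralFactor_singleton_iff.2 ⟨u, hw⟩)
    · have hm₁ : m < n := (hmem m).1 hm₁
      have hm₂ : ¬ m + 1 < n := fun h => hm₂ ((hmem _).2 h)
      obtain rfl : n = m + 1 := by omega
      exact .inr ⟨m.succ_ne_zero, hm.add_one⟩
  · rintro (hb | ⟨hn₀, hev⟩)
    · obtain ⟨u, hu⟩ := List.isCentralFactor_singleton_iff.1 hb
      exact ⟨u, b, hu, .inl rfl⟩
    · obtain ⟨u, hu⟩ := List.isCentralFactor_singleton_iff.1
        (centralFactor_zero ▸ (hmem 0).2 (Nat.pos_of_ne_zero hn₀))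
      obtain ⟨m, rfl⟩ := Nat.exists_eq_succ_of_ne_zero hn₀
      exact ⟨u, a, hu, .inr ⟨rfl, m, by simpa [Nat.even_add_one] using hev,
        (hmem m).2 m.lt_succ_self, fun h => lt_irrefl _ ((hmem _).1 h)⟩⟩

open Classical in
theorem count_eq_ite (w : List AB) : G14.count w = if w ∈ targetLanguage then 1 else 0 := by
  obtain ⟨n, hn⟩ := exists_setOf_isCentralFactor_centralFactor_eq_Iio w
  have ha : IsCentralFactor [a] w ↔ n ≠ 0 := by
    rw [← centralFactor_zero, ← Nat.pos_iff_ne_zero, ← Set.mem_Iio, ← hn, Set.mem_ofPred_eq]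
  rw [mem_targetLanguage_iff hn, count_eq, hn, ← Finset.coe_range, finsum_mem_coe_finset,
    Finset.sum_range_neg_one_pow_succ]
  by_cases hb : IsCentralFactor [b] w
  · have hn₀ : n = 0 := by
      by_contra hn₀
      simpa using (ha.2 hn₀).eq_of_length_eq hb rfl
    simp [List.setOf_isCentralFactor_singleton hb, hb, hn₀]
  · by_cases ha' : IsCentralFactor [a] w
    · rw [List.setOf_isCentralFactor_singleton ha']
      rcases Nat.even_or_odd n with hev | hodd
      · simp [hb, ha.1 ha', hev]
      · simp [hb, Nat.not_even_iff_odd.2 hodd]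
    · have hX : {x | IsCentralFactor [x] w} = ∅ := by
        ext (_ | _) <;> simp [ha', hb]
      simp [hX, hb, not_not.1 (mt ha.2 ha')]

end G14

/-- `G14` is admissible and generates the language of exactly those odd-length
palindromes `w` over `{a, b}` (written as `w = u ++ x :: u.reverse` with central
letter `x`) such that either the central letter is `b`, or the central letter is
`a` and the largest `m ≥ 0` with `w = v ++ (ab)^m a (ba)^m ++ v.reverse` for some
`v` is odd (expressed: some odd `m` admits such a factorization while `m + 1`
does not; the set of admissible `m` is downward closed). -/
theorem G14_generates :
    G14.Generates {w : List AB |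
      ∃ (u : List AB) (x : AB), w = u ++ x :: u.reverse ∧
        (x = b ∨
          (x = a ∧ ∃ m : ℕ, Odd m ∧
            (∃ v : List AB, w = v ++ centralFactor m ++ v.reverse) ∧
            ¬ ∃ v : List AB, w = v ++ centralFactor (m + 1) ++ v.reverse))} := by
  refine ⟨G14.admissible, fun w hw => ?_, fun w hw => ?_⟩
  · exact (G14.count_eq_ite w).trans (if_pos hw)
  · exact (G14.count_eq_ite w).trans (if_neg hw)
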